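/- arXiv:2407.18511 — 3 statements merged into one kernel-verified Lean document; each statement's English description precedes it below -/
import Mathlib

section
/- Let m ≥ 1, let ρ > 0, and let M ⊆ Δ_ρ with ∅ ≠ M ≠ Δ_ρ. Then the pair (D_0, D_1) := (∂^0_ρ M, ∂^1_ρ M) satisfies all five boundary-pair axioms: (1) D_0 ≠ ∅ ≠ D_1; (2) D_0 ∩ D_1 = ∅; (3) for every x ∈ D_0 there exists z ∈ D_1 with ‖x−z‖_∞ = ρ; (4) for every z ∈ D_1 there exists x ∈ D_0 with ‖x−z‖_∞ = ρ; (5) for every x ∈ D_0, every z ∈ D_1 and every path p in Δ_ρ from x to z of length L(p) > 1, there exists ℓ with 0 < ℓ < L(p) such that p(ℓ) ∈ D_0 ∪ D_1. -/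
noncomputable section

/-- The grid `Δ_ρ = ρℤ^m` in `ℝ^m` (with the maximum norm). -/
def grid (m : ℕ) (ρ : ℝ) : Set (Fin m → ℝ) := {x | ∀ j, ∃ k : ℤ, x j = ρ * k}

/-- `∂⁰_ρ M`: points of `M` having a grid neighbour in the complement at distance `ρ`. -/
def bdry0 (m : ℕ) (ρ : ℝ) (M : Set (Fin m → ℝ)) : Set (Fin m → ℝ) :=
  {x | x ∈ M ∧ ∃ z ∈ Mᶜ ∩ grid m ρ, dist x z = ρ}

/-- `∂¹_ρ M`: grid points of the complement at distance `ρ` from `∂⁰_ρ M`. -/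
def bdry1 (m : ℕ) (ρ : ℝ) (M : Set (Fin m → ℝ)) : Set (Fin m → ℝ) :=
  {z | z ∈ Mᶜ ∩ grid m ρ ∧ Metric.infDist z (bdry0 m ρ M) = ρ}

/-- `p` is a path of length `k` from `x` to `z` in the grid `Δ_ρ` with step size at most `ρ`. -/
def IsPath (m : ℕ) (ρ : ℝ) (x z : Fin m → ℝ) (k : ℕ) (p : ℕ → Fin m → ℝ) : Prop :=
  p 0 = x ∧ p k = z ∧ (∀ ℓ ≤ k, p ℓ ∈ grid m ρ) ∧
  ∀ ℓ, 1 ≤ ℓ → ℓ ≤ k → dist (p ℓ) (p (ℓ - 1)) ≤ ρ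

/-- The five boundary-pair axioms for a pair `(D0, D1)` of subsets of the grid `Δ_ρ`. -/
def BoundaryPair (m : ℕ) (ρ : ℝ) (D0 D1 : Set (Fin m → ℝ)) : Prop :=
  D0 ⊆ grid m ρ ∧ D1 ⊆ grid m ρ ∧
  D0 ≠ ∅ ∧ D1 ≠ ∅ ∧ D0 ∩ D1 = ∅ ∧
  (∀ x ∈ D0, ∃ z ∈ D1, dist x z = ρ) ∧
  (∀ z ∈ D1, ∃ x ∈ D0, dist x z = ρ) ∧
  (∀ x ∈ D0, ∀ z ∈ D1, ∀ (k : ℕ) (p : ℕ → Fin m → ℝ), IsPath m ρ x z k p → 1 < k →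
    ∃ ℓ, 0 < ℓ ∧ ℓ < k ∧ p ℓ ∈ D0 ∪ D1)

/-- `M(D0, D1)`: the grid points strictly closer to `D0` than to `D1`. -/
def Mset (m : ℕ) (ρ : ℝ) (D0 D1 : Set (Fin m → ℝ)) : Set (Fin m → ℝ) :=
  {x | x ∈ grid m ρ ∧ Metric.infDist x D0 < Metric.infDist x D1}

section Aux

variable {m : ℕ} {ρ : ℝ}

lemma grid_coord {a b : Fin m → ℝ} (ha : a ∈ grid m ρ) (hb : b ∈ grid m ρ) (j : Fin m) :
    ∃ n : ℤ, a j - b j = ρ * n := by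
  obtain ⟨k, hk⟩ := ha j
  obtain ⟨l, hl⟩ := hb j
  exact ⟨k - l, by rw [hk, hl]; push_cast; ring⟩

lemma grid_sep (hρ : 0 < ρ) {a b : Fin m → ℝ} (ha : a ∈ grid m ρ) (hb : b ∈ grid m ρ)
    (hne : a ≠ b) : ρ ≤ dist a b := by
  obtain ⟨j, hj⟩ : ∃ j, a j ≠ b j := by
    by_contra h; push_neg at h; exact hne (funext h)
  obtain ⟨n, hn⟩ := grid_coord ha hb j
  have hn0 : n ≠ 0 := by
    intro h0; apply hj; rw [h0] at hn; push_cast at hn; linarith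
  have h1 : (1 : ℝ) ≤ |(n : ℝ)| := by
    have : 1 ≤ |n| := Int.one_le_abs hn0
    calc (1:ℝ) = ((1:ℤ):ℝ) := by norm_num
    _ ≤ ((|n|:ℤ):ℝ) := by exact_mod_cast this
    _ = |(n:ℝ)| := by push_cast; ring
  have : ρ ≤ dist (a j) (b j) := by
    rw [Real.dist_eq, hn, abs_mul, abs_of_pos hρ]
    nlinarith
  exact this.trans (dist_le_pi_dist a b j)

lemma grid_small (hρ : 0 < ρ) {a b : Fin m → ℝ} (ha : a ∈ grid m ρ) (hb : b ∈ grid m ρ)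
    (h : dist a b < 2 * ρ) : dist a b ≤ ρ := by
  rw [dist_pi_le_iff hρ.le]
  intro j
  obtain ⟨n, hn⟩ := grid_coord ha hb j
  have hj : dist (a j) (b j) = ρ * |(n:ℝ)| := by
    rw [Real.dist_eq, hn, abs_mul, abs_of_pos hρ]
  have hjle : dist (a j) (b j) < 2 * ρ := (dist_le_pi_dist a b j).trans_lt h
  rw [hj] at hjle ⊢
  have : |(n:ℝ)| < 2 := by nlinarith
  have : |n| < 2 := by exact_mod_cast (by push_cast at this ⊢; linarith : ((|n|:ℤ):ℝ) < 2)
  have : |n| ≤ 1 := by omega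
  have : |(n:ℝ)| ≤ 1 := by exact_mod_cast (by exact_mod_cast this : ((|n|:ℤ):ℝ) ≤ 1)
  nlinarith

lemma adj_mem {M : Set (Fin m → ℝ)} (hρ : 0 < ρ) (hM : M ⊆ grid m ρ) {a b : Fin m → ℝ}
    (haM : a ∈ M) (hbM : b ∉ M) (hbg : b ∈ grid m ρ) (hd : dist a b ≤ ρ) :
    a ∈ bdry0 m ρ M ∧ b ∈ bdry1 m ρ M := by
  have hne : a ≠ b := fun h => hbM (h ▸ haM)
  have heq : dist a b = ρ := le_antisymm hd (grid_sep hρ (hM haM) hbg hne)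
  have ha0 : a ∈ bdry0 m ρ M := ⟨haM, b, ⟨hbM, hbg⟩, heq⟩
  refine ⟨ha0, ⟨⟨hbM, hbg⟩, le_antisymm ?_ ?_⟩⟩
  · exact (Metric.infDist_le_dist_of_mem ha0).trans_eq (by rw [dist_comm]; exact heq)
  · by_contra hlt
    push_neg at hlt
    obtain ⟨y, hy, hyd⟩ := (Metric.infDist_lt_iff ⟨a, ha0⟩).mp hlt
    have : ρ ≤ dist b y :=
      grid_sep hρ hbg (hM hy.1) (fun h => hbM (h ▸ hy.1))
    linarith

lemma exists_adj_pair (hρ : 0 < ρ) {M : Set (Fin m → ℝ)} (hM : M ⊆ grid m ρ) :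
    ∀ N : ℕ, ∀ a : Fin m → ℝ, ∀ v : Fin m → ℤ, a ∈ M →
      (fun j => a j + ρ * v j) ∉ M → (∑ j, (v j).natAbs) ≤ N →
      ∃ a b : Fin m → ℝ, a ∈ M ∧ b ∉ M ∧ b ∈ grid m ρ ∧ dist a b ≤ ρ := by
  intro N
  induction N with
  | zero =>
    intro a v ha hb hsum
    exfalso
    have hz : ∀ j, v j = 0 := by
      intro j
      have : (v j).natAbs = 0 :=
        Nat.eq_zero_of_le_zero ((Finset.single_le_sum (f := fun j => (v j).natAbs)
          (fun i _ => Nat.zero_le _) (Finset.mem_univ j)).trans hsum)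
      omega
    apply hb
    have : (fun j => a j + ρ * v j) = a := by
      funext j; rw [hz j]; push_cast; ring
    rw [this]; exact ha
  | succ N ih =>
    intro a v ha hb hsum
    by_cases hv : ∀ j, v j = 0
    · exfalso
      apply hb
      have : (fun j => a j + ρ * v j) = a := by
        funext j; rw [hv j]; push_cast; ring
      rw [this]; exact ha
    · push_neg at hv
      obtain ⟨j, hj⟩ := hv
      set ε : ℤ := if 0 < v j then 1 else -1 with hε
      set a' : Fin m → ℝ := Function.update a j (a j + ρ * ε) with ha'def
      have ha'g : a' ∈ grid m ρ := by
        intro i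
        by_cases hij : i = j
        · obtain ⟨k, hk⟩ := hM ha j
          subst hij
          refine ⟨k + ε, ?_⟩
          rw [ha'def, Function.update_self, hk]; push_cast; ring
        · rw [ha'def, Function.update_of_ne hij]; exact hM ha i
      have hdist : dist a a' ≤ ρ := by
        rw [dist_pi_le_iff hρ.le]
        intro i
        by_cases hij : i = j
        · subst hij
          rw [ha'def, Function.update_self, Real.dist_eq]
          have hεabs : |(ε:ℝ)| = 1 := by
            rw [hε]; split_ifs <;> norm_num
          rw [show a i - (a i + ρ * ε) = -(ρ * ε) by ring, abs_neg, abs_mul,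
            abs_of_pos hρ, hεabs, mul_one]
        · rw [ha'def, Function.update_of_ne hij]; simp [hρ.le]
      by_cases ha' : a' ∈ M
      · set v' : Fin m → ℤ := Function.update v j (v j - ε) with hv'def
        have hpt : (fun i => a' i + ρ * v' i) = (fun i => a i + ρ * v i) := by
          funext i
          by_cases hij : i = j
          · subst hij
            rw [ha'def, hv'def, Function.update_self, Function.update_self]
            push_cast; ring
          · rw [ha'def, hv'def, Function.update_of_ne hij, Function.update_of_ne hij]
        have hnat : (v j - ε).natAbs + 1 = (v j).natAbs := by
          rw [hε]; split_ifs with h <;> omega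
        have hsum' : (∑ i, (v' i).natAbs) ≤ N := by
          have hupd : (fun i => (v' i).natAbs) =
              Function.update (fun i => (v i).natAbs) j ((v j - ε).natAbs) := by
            funext i
            by_cases hij : i = j
            · subst hij; rw [hv'def]; simp
            · rw [hv'def]; simp [Function.update_of_ne hij]
          have h1 : ∑ i, (v' i).natAbs = (v j - ε).natAbs +
              ∑ i ∈ Finset.univ \ {j}, (v i).natAbs := by
            calc ∑ i, (v' i).natAbs
                = ∑ i, Function.update (fun i => (v i).natAbs) j ((v j - ε).natAbs) i := by
                  rw [← hupd]
            _ = _ := Finset.sum_update_of_mem (Finset.mem_univ j) _ _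
          have h2 : ∑ i, (v i).natAbs = (v j).natAbs +
              ∑ i ∈ Finset.univ \ {j}, (v i).natAbs := by
            rw [← Finset.sum_update_of_mem (Finset.mem_univ j)]
            congr 1
            funext i
            by_cases hij : i = j
            · subst hij; simp
            · simp [Function.update_of_ne hij]
          omega
        have hb' : (fun i => a' i + ρ * v' i) ∉ M := by rw [hpt]; exact hb
        exact ih a' v' ha' hb' hsum'
      · exact ⟨a, a', ha, ha', ha'g, hdist⟩

end Aux

theorem stmt8 (m : ℕ) (hm : 1 ≤ m) (ρ : ℝ) (hρ : 0 < ρ)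
    (M : Set (Fin m → ℝ)) (hM : M ⊆ grid m ρ) (hne : M.Nonempty) (hneq : M ≠ grid m ρ) :
    BoundaryPair m ρ (bdry0 m ρ M) (bdry1 m ρ M) := by
  classical
  -- there is an adjacent pair
  obtain ⟨a, haM⟩ := hne
  obtain ⟨b, hbg, hbM⟩ : ∃ b ∈ grid m ρ, b ∉ M := by
    by_contra h
    push_neg at h
    exact hneq (le_antisymm hM h)
  obtain ⟨c, d, hcM, hdM, hdg, hdd⟩ := by
    refine exists_adj_pair hρ hM (∑ j, ((Classical.choose (hbg j)) -
      (Classical.choose (hM haM j))).natAbs) a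
      (fun j => Classical.choose (hbg j) - Classical.choose (hM haM j)) haM ?_ le_rfl
    have : (fun j => a j + ρ * ((Classical.choose (hbg j)) -
        (Classical.choose (hM haM j)) : ℤ)) = b := by
      funext j
      have h1 := Classical.choose_spec (hM haM j)
      have h2 := Classical.choose_spec (hbg j)
      push_cast; linear_combination h1 - h2
    rw [this]; exact hbM
  obtain ⟨hc0, hd1⟩ := adj_mem hρ hM hcM hdM hdg hdd
  refine ⟨fun x hx => hM hx.1, fun z hz => hz.1.2, ?_, ?_, ?_, ?_, ?_, ?_⟩
  · exact fun h => (h ▸ hc0 : c ∈ (∅ : Set (Fin m → ℝ)))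
  · exact fun h => (h ▸ hd1 : d ∈ (∅ : Set (Fin m → ℝ)))
  · ext y
    simp only [Set.mem_inter_iff, Set.mem_empty_iff_false, iff_false, not_and]
    exact fun h0 h1 => h1.1.1 h0.1
  · -- every x ∈ D0 has a D1 neighbour
    rintro x ⟨hxM, z, ⟨hzM, hzg⟩, hdist⟩
    exact ⟨z, (adj_mem hρ hM hxM hzM hzg hdist.le).2, hdist⟩
  · -- every z ∈ D1 has a D0 neighbour
    rintro z ⟨⟨hzM, hzg⟩, hinf⟩
    have hlt : Metric.infDist z (bdry0 m ρ M) < 2 * ρ := by rw [hinf]; linarith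
    obtain ⟨x, hx0, hxd⟩ := (Metric.infDist_lt_iff ⟨c, hc0⟩).mp hlt
    refine ⟨x, hx0, ?_⟩
    have hle : dist z x ≤ ρ := grid_small hρ hzg (hM hx0.1) hxd
    have hge : ρ ≤ dist z x := grid_sep hρ hzg (hM hx0.1) (fun h => hzM (h ▸ hx0.1))
    rw [dist_comm]; linarith
  · -- path axiom
    rintro x hx0 z hz1 k p ⟨hp0, hpk, hpg, hpd⟩ hk
    have hex : ∃ i, p i ∉ M := ⟨k, by rw [hpk]; exact hz1.1.1⟩
    set j := Nat.find hex with hj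
    have hjM : p j ∉ M := Nat.find_spec hex
    have hj1 : 1 ≤ j := by
      rcases Nat.eq_zero_or_pos j with h | h
      · exfalso; apply hjM; rw [h, hp0]; exact hx0.1
      · exact h
    have hjk : j ≤ k := Nat.find_min' hex (by rw [hpk]; exact hz1.1.1)
    have hprevM : p (j - 1) ∈ M := by
      by_contra h
      exact absurd (Nat.find_min' hex h) (by omega)
    have := adj_mem hρ hM hprevM hjM (hpg j hjk) (by rw [dist_comm]; exact hpd j hj1 hjk)
    rcases Nat.lt_or_ge j k with h | h
    · exact ⟨j, by omega, h, Or.inr this.2⟩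
    · have hjeq : j = k := le_antisymm hjk h
      exact ⟨k - 1, by omega, by omega, Or.inl (hjeq ▸ this.1)⟩
end
end

section
/- Let m ≥ 1 and ρ > 0, and let (D_0, D_1) be a pair of subsets of Δ_ρ satisfying the five boundary-pair axioms. Define M(D_0, D_1) := {x ∈ Δ_ρ : dist(x, D_0) < dist(x, D_1)} and M(D_1, D_0) := {x ∈ Δ_ρ : dist(x, D_1) < dist(x, D_0)}. Then ∅ ≠ M(D_0, D_1) ≠ Δ_ρ and ∅ ≠ M(D_1, D_0) ≠ Δ_ρ, D_0 ⊆ M(D_0, D_1), D_1 ⊆ M(D_1, D_0), and M(D_1, D_0) = M(D_0, D_1)^c ∩ Δ_ρ. -/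
noncomputable section

/-- Move from `b` toward `a` by at most `t`. -/
def stepR (a b t : ℝ) : ℝ := if b ≤ a then min (b + t) a else max (b - t) a

lemma stepR_zero (a b : ℝ) : stepR a b 0 = b := by
  unfold stepR; split
  · rw [add_zero]; exact min_eq_left (by assumption)
  · rw [sub_zero]; exact max_eq_left (le_of_not_ge (by assumption))

lemma stepR_end (a b t : ℝ) (h : |a - b| ≤ t) : stepR a b t = a := by
  rcases abs_le.mp h with ⟨h1, h2⟩
  unfold stepR; split
  · exact min_eq_right (by linarith)
  · exact max_eq_right (by linarith)

lemma stepR_dist_end (a b t : ℝ) (ht : 0 ≤ t) : |stepR a b t - a| ≤ max (|a - b| - t) 0 := by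
  unfold stepR
  rcases le_or_gt b a with h | h
  · rw [if_pos h, abs_of_nonneg (by linarith : (0:ℝ) ≤ a - b)]
    rcases le_total (b + t) a with h2 | h2
    · rw [min_eq_left h2, abs_of_nonpos (by linarith)]
      have := le_max_left (a - b - t) (0:ℝ); linarith
    · rw [min_eq_right h2]
      simpa using le_max_right (a - b - t) (0:ℝ)
  · rw [if_neg (not_le.mpr h), abs_of_neg (by linarith : a - b < 0)]
    rcases le_total a (b - t) with h2 | h2
    · rw [max_eq_left h2, abs_of_nonneg (by linarith)]
      have := le_max_left (-(a - b) - t) (0:ℝ); linarith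
    · rw [max_eq_right h2]
      simpa using le_max_right (-(a - b) - t) (0:ℝ)

lemma stepR_step (a b t s : ℝ) (hs : 0 ≤ s) : |stepR a b (t + s) - stepR a b t| ≤ s := by
  unfold stepR; split
  · rcases le_total (b + t) a with h1 | h1 <;> rcases le_total (b + (t + s)) a with h2 | h2 <;>
      rw [abs_le] <;>
      first
        | (rw [min_eq_left h1, min_eq_left h2]; constructor <;> linarith)
        | (rw [min_eq_left h1, min_eq_right h2]; constructor <;> linarith)
        | (rw [min_eq_right h1, min_eq_left h2]; constructor <;> linarith)
        | (rw [min_eq_right h1, min_eq_right h2]; constructor <;> linarith)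
  · rcases le_total a (b - t) with h1 | h1 <;> rcases le_total a (b - (t + s)) with h2 | h2 <;>
      rw [abs_le] <;>
      first
        | (rw [max_eq_left h1, max_eq_left h2]; constructor <;> linarith)
        | (rw [max_eq_left h1, max_eq_right h2]; constructor <;> linarith)
        | (rw [max_eq_right h1, max_eq_left h2]; constructor <;> linarith)
        | (rw [max_eq_right h1, max_eq_right h2]; constructor <;> linarith)

lemma stepR_dist_start (a b t : ℝ) (ht : 0 ≤ t) : |stepR a b t - b| ≤ t := by
  have := stepR_step a b 0 t ht
  rwa [zero_add, stepR_zero] at this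

lemma stepR_grid (ρ : ℝ) (hρ : 0 < ρ) (ka kb : ℤ) (ℓ : ℕ) :
    ∃ k : ℤ, stepR (ρ * ka) (ρ * kb) (ℓ * ρ) = ρ * k := by
  unfold stepR; split
  · refine ⟨min (kb + ℓ) ka, ?_⟩
    push_cast
    rw [mul_min_of_nonneg _ _ hρ.le, mul_add]
    ring_nf
  · refine ⟨max (kb - ℓ) ka, ?_⟩
    push_cast
    rw [mul_max_of_nonneg _ _ hρ.le, mul_sub]
    ring_nf

lemma grid_eq_of_dist_lt {m : ℕ} {ρ : ℝ} (hρ : 0 < ρ) {x y : Fin m → ℝ}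
    (hx : x ∈ grid m ρ) (hy : y ∈ grid m ρ) (h : dist x y < ρ) : x = y := by
  funext j
  obtain ⟨k, hk⟩ := hx j
  obtain ⟨k', hk'⟩ := hy j
  have h1 : dist (x j) (y j) < ρ := lt_of_le_of_lt (dist_le_pi_dist x y j) h
  rw [Real.dist_eq, hk, hk'] at h1
  have h2 : ρ * |(k : ℝ) - k'| < ρ := by
    calc ρ * |(k : ℝ) - k'| = |ρ * ((k:ℝ) - k')| := by rw [abs_mul, abs_of_pos hρ]
    _ = |ρ * k - ρ * k'| := by ring_nf
    _ < ρ := h1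
  have h3 : |(k : ℝ) - k'| < 1 := by
    nlinarith [abs_nonneg ((k:ℝ) - k')]
  have h4 : ((k - k').natAbs : ℝ) < 1 := by
    rw [Nat.cast_natAbs]; push_cast; exact h3
  have h5 : (k - k').natAbs < 1 := by exact_mod_cast h4
  have : k = k' := by omega
  rw [hk, hk', this]

lemma isClosed_of_subset_grid {m : ℕ} {ρ : ℝ} (hρ : 0 < ρ) {D : Set (Fin m → ℝ)}
    (hD : D ⊆ grid m ρ) : IsClosed D := by
  refine isClosed_of_closure_subset fun x hx => ?_
  rw [Metric.mem_closure_iff] at hx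
  obtain ⟨y, hy, hxy⟩ := hx (ρ/2) (by linarith)
  rcases eq_or_lt_of_le (dist_nonneg : (0:ℝ) ≤ dist x y) with h0 | h0
  · rwa [show x = y from dist_eq_zero.mp h0.symm]
  · obtain ⟨y', hy', hxy'⟩ := hx (dist x y) h0
    have : y = y' := grid_eq_of_dist_lt hρ (hD hy) (hD hy')
      (lt_of_le_of_lt (dist_triangle y x y') (by rw [dist_comm y x]; linarith))
    rw [← this] at hxy'; linarith

lemma infDist_ge {m : ℕ} {ρ : ℝ} (hρ : 0 < ρ) {D : Set (Fin m → ℝ)} (hDg : D ⊆ grid m ρ)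
    (hDne : D.Nonempty) {x : Fin m → ℝ} (hx : x ∈ grid m ρ) (hxD : x ∉ D) :
    ρ ≤ Metric.infDist x D := by
  by_contra h
  push_neg at h
  obtain ⟨y, hy, hxy⟩ := (Metric.infDist_lt_iff hDne).mp h
  exact hxD ((grid_eq_of_dist_lt hρ hx (hDg hy) hxy) ▸ hy)

/-- Path of grid steps from `y` toward `x`. -/
def pathTo (ρ : ℝ) (x y : Fin m → ℝ) (ℓ : ℕ) : Fin m → ℝ := fun j => stepR (x j) (y j) (ℓ * ρ)

lemma pathTo_zero {m : ℕ} (ρ : ℝ) (x y : Fin m → ℝ) : pathTo ρ x y 0 = y := by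
  funext j; simp [pathTo, stepR_zero]

lemma pathTo_end {m : ℕ} {ρ : ℝ} {x y : Fin m → ℝ} {n : ℕ} (h : dist x y ≤ n * ρ) :
    pathTo ρ x y n = x := by
  funext j
  exact stepR_end _ _ _ (le_trans (by rw [← Real.dist_eq]; exact dist_le_pi_dist x y j) h)

lemma pathTo_grid {m : ℕ} {ρ : ℝ} (hρ : 0 < ρ) {x y : Fin m → ℝ}
    (hx : x ∈ grid m ρ) (hy : y ∈ grid m ρ) (ℓ : ℕ) : pathTo ρ x y ℓ ∈ grid m ρ := by
  intro j
  obtain ⟨ka, hka⟩ := hx j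
  obtain ⟨kb, hkb⟩ := hy j
  simpa [pathTo, hka, hkb] using stepR_grid ρ hρ ka kb ℓ

lemma pathTo_step {m : ℕ} {ρ : ℝ} (hρ : 0 < ρ) (x y : Fin m → ℝ) {ℓ : ℕ} (hℓ : 1 ≤ ℓ) :
    dist (pathTo ρ x y ℓ) (pathTo ρ x y (ℓ - 1)) ≤ ρ := by
  refine (dist_pi_le_iff hρ.le).mpr fun j => ?_
  have h : (ℓ : ℝ) * ρ = ((ℓ - 1 : ℕ) : ℝ) * ρ + ρ := by
    have : ((ℓ - 1 : ℕ) : ℝ) = (ℓ : ℝ) - 1 := by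
      push_cast [Nat.cast_sub hℓ]; ring
    rw [this]; ring
  rw [Real.dist_eq]
  calc |stepR (x j) (y j) (ℓ * ρ) - stepR (x j) (y j) ((ℓ - 1 : ℕ) * ρ)| ≤ ρ := by
        rw [h]; exact stepR_step _ _ _ _ hρ.le

lemma pathTo_dist_start {m : ℕ} {ρ : ℝ} (hρ : 0 < ρ) (x y : Fin m → ℝ) (ℓ : ℕ) :
    dist (pathTo ρ x y ℓ) y ≤ ℓ * ρ := by
  refine (dist_pi_le_iff (by positivity)).mpr fun j => ?_
  rw [Real.dist_eq]
  exact stepR_dist_start _ _ _ (by positivity)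

lemma pathTo_dist_end {m : ℕ} {ρ : ℝ} (hρ : 0 < ρ) {x y : Fin m → ℝ} {d : ℝ}
    (hd : dist x y ≤ d) (hdρ : ρ ≤ d) {ℓ : ℕ} (hℓ : 1 ≤ ℓ) :
    dist (pathTo ρ x y ℓ) x ≤ d - ρ := by
  refine (dist_pi_le_iff (by linarith)).mpr fun j => ?_
  rw [Real.dist_eq]
  refine le_trans (stepR_dist_end _ _ _ (by positivity)) (max_le ?_ (by linarith))
  have h1 : |x j - y j| ≤ d := le_trans (by rw [← Real.dist_eq]; exact dist_le_pi_dist x y j) hd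
  have h2 : ρ ≤ (ℓ : ℝ) * ρ := by
    have : (1 : ℝ) ≤ (ℓ : ℝ) := by exact_mod_cast hℓ
    nlinarith
  linarith

lemma infDist_ne {m : ℕ} {ρ : ℝ} (hρ : 0 < ρ) {D0 D1 : Set (Fin m → ℝ)}
    (hD : BoundaryPair m ρ D0 D1) {x : Fin m → ℝ} (hx : x ∈ grid m ρ) :
    Metric.infDist x D0 ≠ Metric.infDist x D1 := by
  obtain ⟨hD0g, hD1g, hD0ne, hD1ne, hdisj, -, -, hax5⟩ := hD
  rw [← Set.nonempty_iff_ne_empty] at hD0ne hD1ne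
  by_cases hx0 : x ∈ D0
  · have hx1 : x ∉ D1 := fun h => Set.eq_empty_iff_forall_notMem.mp hdisj x ⟨hx0, h⟩
    rw [Metric.infDist_zero_of_mem hx0]
    have h1 := infDist_ge hρ hD1g hD1ne hx hx1
    intro h; rw [← h] at h1; linarith
  by_cases hx1 : x ∈ D1
  · rw [Metric.infDist_zero_of_mem hx1]
    have h1 := infDist_ge hρ hD0g hD0ne hx hx0
    intro h; rw [h] at h1; linarith
  intro heq
  set d := Metric.infDist x D0 with hd
  have hdρ : ρ ≤ d := infDist_ge hρ hD0g hD0ne hx hx0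
  obtain ⟨y0, hy0, hy0d⟩ := (isClosed_of_subset_grid hρ hD0g).exists_infDist_eq_dist hD0ne x
  obtain ⟨y1, hy1, hy1d⟩ := (isClosed_of_subset_grid hρ hD1g).exists_infDist_eq_dist hD1ne x
  have hdx0 : dist x y0 = d := hy0d.symm
  have hdx1 : dist x y1 = d := by rw [← hy1d, ← heq]
  set n := ⌈d / ρ⌉₊ with hn
  have hn1 : 1 ≤ n := Nat.ceil_pos.mpr (div_pos (lt_of_lt_of_le hρ hdρ) hρ)
  have hnd : d ≤ (n : ℝ) * ρ := by
    have h1 := Nat.le_ceil (d / ρ)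
    have h2 := mul_le_mul_of_nonneg_right h1 hρ.le
    rwa [div_mul_cancel₀ d hρ.ne'] at h2
  have hn' : ((n - 1 : ℕ) : ℝ) * ρ < d := by
    have h1 : (n : ℝ) < d / ρ + 1 := Nat.ceil_lt_add_one (div_nonneg (by linarith) hρ.le)
    have h2 : ((n - 1 : ℕ) : ℝ) = (n : ℝ) - 1 := by push_cast [Nat.cast_sub hn1]; ring
    have h3 : ((n : ℝ) - 1) * ρ < (d / ρ) * ρ := by nlinarith
    rw [div_mul_cancel₀ d hρ.ne'] at h3
    rw [h2]; exact h3
  set q : ℕ → Fin m → ℝ := fun ℓ => if ℓ ≤ n then pathTo ρ x y0 ℓ else pathTo ρ y1 x (ℓ - n)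
    with hqdef
  have hAn : pathTo ρ x y0 n = x := pathTo_end (by rw [hdx0]; exact hnd)
  have hBn : pathTo ρ y1 x n = y1 := pathTo_end (by rw [dist_comm, hdx1]; exact hnd)
  have hpath : IsPath m ρ y0 y1 (2 * n) q := by
    refine ⟨?_, ?_, ?_, ?_⟩
    · simp only [hqdef, if_pos (Nat.zero_le n), pathTo_zero]
    · have h2n : ¬ (2 * n ≤ n) := by omega
      simp only [hqdef, if_neg h2n]
      rw [show 2 * n - n = n from by omega]; exact hBn
    · intro ℓ _
      by_cases h : ℓ ≤ n
      · simp only [hqdef, if_pos h]; exact pathTo_grid hρ hx (hD0g hy0) ℓ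
      · simp only [hqdef, if_neg h]; exact pathTo_grid hρ (hD1g hy1) hx _
    · intro ℓ h1 h2
      by_cases h : ℓ ≤ n
      · have h' : ℓ - 1 ≤ n := by omega
        simp only [hqdef, if_pos h, if_pos h']
        exact pathTo_step hρ _ _ h1
      · have hq1 : q ℓ = pathTo ρ y1 x (ℓ - n) := if_neg h
        have hq2 : q (ℓ - 1) = pathTo ρ y1 x (ℓ - 1 - n) := by
          by_cases h' : ℓ - 1 ≤ n
          · have he : ℓ - 1 = n := by omega
            simp only [hqdef, if_pos h', he, hAn]
            rw [show n - n = 0 from by omega, pathTo_zero]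
            simp
          · simp only [hqdef, if_neg h']
        rw [hq1, hq2, show ℓ - 1 - n = (ℓ - n) - 1 from by omega]
        exact pathTo_step hρ _ _ (by omega)
  obtain ⟨ℓ, hℓ0, hℓk, hmem⟩ := hax5 y0 hy0 y1 hy1 (2 * n) q hpath (by omega)
  have hlt : dist x (q ℓ) < d := by
    by_cases h : ℓ ≤ n
    · have hqe : q ℓ = pathTo ρ x y0 ℓ := if_pos h
      rw [hqe, dist_comm]
      have := pathTo_dist_end hρ (le_of_eq hdx0) hdρ hℓ0
      linarith
    · have hqe : q ℓ = pathTo ρ y1 x (ℓ - n) := if_neg h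
      rw [hqe, dist_comm]
      have hb := pathTo_dist_start hρ y1 x (ℓ - n)
      have hc : ((ℓ - n : ℕ) : ℝ) ≤ ((n - 1 : ℕ) : ℝ) := by
        exact_mod_cast (by omega : ℓ - n ≤ n - 1)
      nlinarith
  rcases hmem with hmm | hmm
  · have := Metric.infDist_le_dist_of_mem (x := x) hmm
    rw [← hd] at this; linarith
  · have := Metric.infDist_le_dist_of_mem (x := x) hmm
    rw [← heq] at this; linarith

theorem stmt9 (m : ℕ) (hm : 1 ≤ m) (ρ : ℝ) (hρ : 0 < ρ)
    (D0 D1 : Set (Fin m → ℝ)) (hD : BoundaryPair m ρ D0 D1) :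
    (Mset m ρ D0 D1 ≠ ∅ ∧ Mset m ρ D0 D1 ≠ grid m ρ) ∧
    (Mset m ρ D1 D0 ≠ ∅ ∧ Mset m ρ D1 D0 ≠ grid m ρ) ∧
    D0 ⊆ Mset m ρ D0 D1 ∧ D1 ⊆ Mset m ρ D1 D0 ∧
    Mset m ρ D1 D0 = (Mset m ρ D0 D1)ᶜ ∩ grid m ρ := by
  obtain ⟨hD0g, hD1g, hD0ne, hD1ne, hdisj, hax3, hax4, hax5⟩ := hD
  rw [← Set.nonempty_iff_ne_empty] at hD0ne hD1ne
  have hdisj' : ∀ x, x ∈ D0 → x ∈ D1 → False := fun x h0 h1 =>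
    Set.eq_empty_iff_forall_notMem.mp hdisj x ⟨h0, h1⟩
  have hsub0 : D0 ⊆ Mset m ρ D0 D1 := by
    intro x hx
    refine ⟨hD0g hx, ?_⟩
    rw [Metric.infDist_zero_of_mem hx]
    exact lt_of_lt_of_le hρ (infDist_ge hρ hD1g hD1ne (hD0g hx) fun h => hdisj' x hx h)
  have hsub1 : D1 ⊆ Mset m ρ D1 D0 := by
    intro x hx
    refine ⟨hD1g hx, ?_⟩
    rw [Metric.infDist_zero_of_mem hx]
    exact lt_of_lt_of_le hρ (infDist_ge hρ hD0g hD0ne (hD1g hx) fun h => hdisj' x h hx)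
  have hBP : BoundaryPair m ρ D0 D1 :=
    ⟨hD0g, hD1g, Set.nonempty_iff_ne_empty.mp hD0ne, Set.nonempty_iff_ne_empty.mp hD1ne,
      hdisj, hax3, hax4, hax5⟩
  have hnotmem0 : ∀ x ∈ D1, x ∉ Mset m ρ D0 D1 := by
    rintro x hx ⟨-, hlt⟩
    rw [Metric.infDist_zero_of_mem hx] at hlt
    have := infDist_ge hρ hD0g hD0ne (hD1g hx) fun h => hdisj' x h hx
    linarith
  have hnotmem1 : ∀ x ∈ D0, x ∉ Mset m ρ D1 D0 := by
    rintro x hx ⟨-, hlt⟩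
    rw [Metric.infDist_zero_of_mem hx] at hlt
    have := infDist_ge hρ hD1g hD1ne (hD0g hx) fun h => hdisj' x hx h
    linarith
  obtain ⟨a0, ha0⟩ := hD0ne
  obtain ⟨a1, ha1⟩ := hD1ne
  refine ⟨⟨?_, ?_⟩, ⟨?_, ?_⟩, hsub0, hsub1, ?_⟩
  · exact Set.nonempty_iff_ne_empty.mp ⟨a0, hsub0 ha0⟩
  · intro h
    exact hnotmem0 a1 ha1 (h ▸ hD1g ha1)
  · exact Set.nonempty_iff_ne_empty.mp ⟨a1, hsub1 ha1⟩
  · intro h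
    exact hnotmem1 a0 ha0 (h ▸ hD0g ha0)
  · ext x
    simp only [Mset, Set.mem_setOf_eq, Set.mem_inter_iff, Set.mem_compl_iff]
    constructor
    · rintro ⟨hg, hlt⟩
      exact ⟨fun h' => absurd hlt (not_lt.mpr h'.2.le), hg⟩
    · rintro ⟨hnot, hg⟩
      refine ⟨hg, ?_⟩
      have h1 : ¬ Metric.infDist x D0 < Metric.infDist x D1 := fun h => hnot ⟨hg, h⟩
      exact lt_of_le_of_ne (not_lt.mp h1) (infDist_ne hρ hBP hg).symm
end
end

section
/- Let m ≥ 1 and ρ > 0. The map tr_ρ sending a nonempty set M ⊆ Δ_ρ to the pair (∂^0_ρ M, ∂^1_ρ M) is a bijection from S_ρ (the collection of nonempty subsets of Δ_ρ) onto bd_ρ (the collection of pairs of subsets of Δ_ρ satisfying the five boundary-pair axioms, together with the pair (∅, ∅)), and its inverse sends (D_0, D_1) ∈ bd_ρ with (D_0,D_1) ≠ (∅,∅) to M(D_0, D_1) := {x ∈ Δ_ρ : dist(x, D_0) < dist(x, D_1)}, and sends (∅, ∅) to Δ_ρ. -/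
noncomputable section

section Helpers

open Metric

variable {m : ℕ} {ρ : ℝ}



open Metric

variable {m : ℕ} {ρ : ℝ}

lemma le_infDist' {X : Type*} [MetricSpace X] {s : Set X} {x : X} {d : ℝ}
    (hs : s.Nonempty) (H : ∀ y ∈ s, d ≤ dist x y) : d ≤ infDist x s := by
  by_contra h
  obtain ⟨y, hy, hlt⟩ := (infDist_lt_iff hs).1 (not_le.1 h)
  exact absurd (H y hy) (not_le.2 hlt)

lemma grid_rep {x : Fin m → ℝ} (hx : x ∈ grid m ρ) :
    ∃ a : Fin m → ℤ, x = fun j => ρ * (a j : ℝ) := by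
  choose a ha using hx; exact ⟨a, funext ha⟩

lemma pt_mem_grid (a : Fin m → ℤ) : (fun j => ρ * (a j : ℝ)) ∈ grid m ρ :=
  fun j => ⟨a j, rfl⟩

lemma coord_dist (hρ : 0 < ρ) (u v : ℤ) :
    dist (ρ * (u : ℝ)) (ρ * (v : ℝ)) = ρ * (((u - v).natAbs : ℕ) : ℝ) := by
  rw [Real.dist_eq, show ρ * (u:ℝ) - ρ * v = ρ * ((u:ℝ) - v) by ring, abs_mul,
    abs_of_pos hρ]
  congr 1
  rw [Nat.cast_natAbs]
  push_cast
  rfl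

lemma dist_pts (hm : 1 ≤ m) (hρ : 0 < ρ) (a b : Fin m → ℤ) :
    dist (fun j => ρ * (a j : ℝ)) (fun j => ρ * (b j : ℝ))
      = ρ * ((Finset.univ.sup fun j => (a j - b j).natAbs : ℕ) : ℝ) := by
  have hne : Nonempty (Fin m) := ⟨⟨0, hm⟩⟩
  set n := Finset.univ.sup fun j => (a j - b j).natAbs with hn
  apply le_antisymm
  · refine (dist_pi_le_iff (by positivity)).2 fun j => ?_
    rw [coord_dist hρ]
    have : (a j - b j).natAbs ≤ n := Finset.le_sup (f := fun j => (a j - b j).natAbs) (Finset.mem_univ j)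
    exact mul_le_mul_of_nonneg_left (Nat.cast_le.2 this) hρ.le
  · obtain ⟨j, -, hj⟩ := Finset.exists_mem_eq_sup Finset.univ Finset.univ_nonempty
      (fun j => (a j - b j).natAbs)
    calc ρ * (n : ℝ) = dist (ρ * (a j : ℝ)) (ρ * (b j : ℝ)) := by rw [coord_dist hρ, ← hj]
    _ ≤ _ := by simpa using dist_le_pi_dist (fun j => ρ * (a j : ℝ)) (fun j => ρ * (b j : ℝ)) j

lemma grid_dist_exists (hm : 1 ≤ m) (hρ : 0 < ρ) {x y : Fin m → ℝ}
    (hx : x ∈ grid m ρ) (hy : y ∈ grid m ρ) : ∃ n : ℕ, dist x y = ρ * n := by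
  obtain ⟨a, rfl⟩ := grid_rep hx
  obtain ⟨b, rfl⟩ := grid_rep hy
  exact ⟨_, dist_pts hm hρ a b⟩

lemma grid_dist_ge (hm : 1 ≤ m) (hρ : 0 < ρ) {x y : Fin m → ℝ}
    (hx : x ∈ grid m ρ) (hy : y ∈ grid m ρ) (hne : x ≠ y) : ρ ≤ dist x y := by
  obtain ⟨n, hn⟩ := grid_dist_exists hm hρ hx hy
  have h0 : dist x y ≠ 0 := fun h => hne (eq_of_dist_eq_zero h)
  have hn1 : 1 ≤ n := by
    rcases Nat.eq_zero_or_pos n with h | h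
    · exfalso; apply h0; rw [hn, h]; simp
    · exact h
  rw [hn]
  calc ρ = ρ * (1:ℝ) := by ring
  _ ≤ ρ * n := by
      have : (1:ℝ) ≤ n := by exact_mod_cast hn1
      exact mul_le_mul_of_nonneg_left this hρ.le

lemma infDist_attained (hm : 1 ≤ m) (hρ : 0 < ρ) {S : Set (Fin m → ℝ)}
    (hS : S ⊆ grid m ρ) (hne : S.Nonempty) {x : Fin m → ℝ} (hx : x ∈ grid m ρ) :
    ∃ (y : Fin m → ℝ) (n : ℕ), y ∈ S ∧ dist x y = ρ * n ∧ infDist x S = ρ * n := by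
  classical
  obtain ⟨y₀, hy₀⟩ := id hne
  obtain ⟨n₀, hn₀⟩ := grid_dist_exists hm hρ hx (hS hy₀)
  have hex : ∃ n : ℕ, ∃ y ∈ S, dist x y = ρ * n := ⟨n₀, y₀, hy₀, hn₀⟩
  obtain ⟨y, hyS, hy⟩ := Nat.find_spec hex
  refine ⟨y, Nat.find hex, hyS, hy, le_antisymm (hy ▸ infDist_le_dist_of_mem hyS) ?_⟩
  refine le_infDist' hne fun z hz => ?_
  obtain ⟨k, hk⟩ := grid_dist_exists hm hρ hx (hS hz)
  have hle : Nat.find hex ≤ k := Nat.find_min' hex ⟨z, hz, hk⟩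
  rw [hk]
  exact mul_le_mul_of_nonneg_left (Nat.cast_le.2 hle) hρ.le

lemma infDist_ge_of_notMem (hm : 1 ≤ m) (hρ : 0 < ρ) {S : Set (Fin m → ℝ)}
    (hS : S ⊆ grid m ρ) (hne : S.Nonempty) {x : Fin m → ℝ} (hx : x ∈ grid m ρ)
    (hxS : x ∉ S) : ρ ≤ infDist x S :=
  le_infDist' hne fun y hy => grid_dist_ge hm hρ hx (hS hy) (fun h => hxS (h ▸ hy))

lemma mem_of_infDist_eq_zero (hm : 1 ≤ m) (hρ : 0 < ρ) {S : Set (Fin m → ℝ)}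
    (hS : S ⊆ grid m ρ) (hne : S.Nonempty) {x : Fin m → ℝ} (hx : x ∈ grid m ρ)
    (h : infDist x S = 0) : x ∈ S := by
  by_contra hxS
  exact absurd (h ▸ infDist_ge_of_notMem hm hρ hS hne hx hxS) (not_le.2 hρ)

/-- The straight grid path from `ρ•a` to `ρ•b`: at step `ℓ` each coordinate has moved
by at most `ℓ` units towards its target. -/
def pth (ρ : ℝ) (a b : Fin m → ℤ) (ℓ : ℕ) : Fin m → ℝ :=
  fun j => ρ * ((a j + max (-(ℓ:ℤ)) (min (ℓ:ℤ) (b j - a j)) : ℤ) : ℝ)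

lemma pth_mem (a b : Fin m → ℤ) (ℓ : ℕ) : pth ρ a b ℓ ∈ grid m ρ :=
  fun j => ⟨_, rfl⟩

lemma pth_zero (a b : Fin m → ℤ) : pth ρ a b 0 = fun j => ρ * (a j : ℝ) := by
  funext j
  simp only [pth]
  congr 1
  have : a j + max (-(0:ℤ)) (min (0:ℤ) (b j - a j)) = a j := by omega
  exact_mod_cast congrArg (Int.cast : ℤ → ℝ) this

lemma pth_last {a b : Fin m → ℤ} {n : ℕ} (h : ∀ j, (b j - a j).natAbs ≤ n) :
    pth ρ a b n = fun j => ρ * (b j : ℝ) := by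
  funext j
  simp only [pth]
  congr 1
  have := h j
  have : a j + max (-(n:ℤ)) (min (n:ℤ) (b j - a j)) = b j := by omega
  exact_mod_cast congrArg (Int.cast : ℤ → ℝ) this

lemma pth_step (hρ : 0 < ρ) (a b : Fin m → ℤ) {ℓ : ℕ} (hℓ : 1 ≤ ℓ) :
    dist (pth ρ a b ℓ) (pth ρ a b (ℓ - 1)) ≤ ρ := by
  obtain ⟨t, rfl⟩ : ∃ t, ℓ = t + 1 := ⟨ℓ - 1, by omega⟩
  simp only [Nat.add_sub_cancel]
  refine (dist_pi_le_iff hρ.le).2 fun j => ?_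
  simp only [pth]
  rw [coord_dist hρ]
  have h1 : ((a j + max (-((t:ℕ)+1:ℤ)) (min ((t:ℕ)+1:ℤ) (b j - a j)))
      - (a j + max (-(t:ℤ)) (min (t:ℤ) (b j - a j)))).natAbs ≤ 1 := by
    push_cast
    omega
  calc ρ * _ ≤ ρ * (1:ℝ) := by
        refine mul_le_mul_of_nonneg_left ?_ hρ.le
        exact_mod_cast (by push_cast at h1 ⊢; exact_mod_cast h1 : _)
  _ = ρ := by ring

lemma pth_dist_start (hρ : 0 < ρ) (a b : Fin m → ℤ) (ℓ : ℕ) :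
    dist (fun j => ρ * (a j : ℝ)) (pth ρ a b ℓ) ≤ ρ * ℓ := by
  refine (dist_pi_le_iff (by positivity)).2 fun j => ?_
  simp only [pth]
  rw [coord_dist hρ]
  refine mul_le_mul_of_nonneg_left ?_ hρ.le
  have h1 : (a j - (a j + max (-(ℓ:ℤ)) (min (ℓ:ℤ) (b j - a j)))).natAbs ≤ ℓ := by omega
  exact_mod_cast h1

lemma pth_dist_end (hρ : 0 < ρ) {a b : Fin m → ℤ} {n : ℕ}
    (h : ∀ j, (b j - a j).natAbs ≤ n) {ℓ : ℕ} (hℓ : ℓ ≤ n) :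
    dist (pth ρ a b ℓ) (fun j => ρ * (b j : ℝ)) ≤ ρ * ((n : ℝ) - ℓ) := by
  have hnn : (0:ℝ) ≤ (n : ℝ) - ℓ := by
    have : (ℓ:ℝ) ≤ n := by exact_mod_cast hℓ
    linarith
  refine (dist_pi_le_iff (by positivity)).2 fun j => ?_
  simp only [pth]
  rw [coord_dist hρ]
  refine mul_le_mul_of_nonneg_left ?_ hρ.le
  have h1 : ((a j + max (-(ℓ:ℤ)) (min (ℓ:ℤ) (b j - a j))) - b j).natAbs + ℓ ≤ n := by
    have := h j; omega
  have h2 : (((a j + max (-(ℓ:ℤ)) (min (ℓ:ℤ) (b j - a j))) - b j).natAbs : ℝ) + ℓ ≤ n := by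
    exact_mod_cast h1
  linarith

/-- Straight-line connection between two grid points, with all the metric estimates. -/
lemma connect (hm : 1 ≤ m) (hρ : 0 < ρ) {x z : Fin m → ℝ}
    (hx : x ∈ grid m ρ) (hz : z ∈ grid m ρ) :
    ∃ (n : ℕ) (p : ℕ → Fin m → ℝ), dist x z = ρ * n ∧ p 0 = x ∧ p n = z ∧
      (∀ ℓ, p ℓ ∈ grid m ρ) ∧ (∀ ℓ, 1 ≤ ℓ → dist (p ℓ) (p (ℓ - 1)) ≤ ρ) ∧
      (∀ ℓ, dist x (p ℓ) ≤ ρ * ℓ) ∧ (∀ ℓ ≤ n, dist (p ℓ) z ≤ ρ * ((n : ℝ) - ℓ)) := by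
  obtain ⟨a, rfl⟩ := grid_rep hx
  obtain ⟨b, rfl⟩ := grid_rep hz
  set n := Finset.univ.sup fun j => (a j - b j).natAbs with hn
  have hbound : ∀ j, (b j - a j).natAbs ≤ n := fun j => by
    have h1 : (a j - b j).natAbs ≤ n :=
      Finset.le_sup (f := fun j => (a j - b j).natAbs) (Finset.mem_univ j)
    omega
  exact ⟨n, pth ρ a b, dist_pts hm hρ a b, pth_zero a b, pth_last hbound,
    pth_mem a b, fun ℓ hℓ => pth_step hρ a b hℓ, pth_dist_start hρ a b,
    fun ℓ hℓ => pth_dist_end hρ hbound hℓ⟩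

lemma bdry0_subset (M : Set (Fin m → ℝ)) : bdry0 m ρ M ⊆ M := fun _ h => h.1

lemma bdry0_subset_grid {M : Set (Fin m → ℝ)} (hM : M ⊆ grid m ρ) :
    bdry0 m ρ M ⊆ grid m ρ := fun x h => hM h.1

lemma bdry1_subset_grid (M : Set (Fin m → ℝ)) : bdry1 m ρ M ⊆ grid m ρ :=
  fun _ h => h.1.2

/-- A complement grid point at distance `ρ` from a point of `∂⁰M` lies in `∂¹M`. -/
lemma mem_bdry1_of_nbr (hm : 1 ≤ m) (hρ : 0 < ρ) {M : Set (Fin m → ℝ)}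
    (hM : M ⊆ grid m ρ) {z : Fin m → ℝ} (hz : z ∈ Mᶜ ∩ grid m ρ)
    {x : Fin m → ℝ} (hx : x ∈ bdry0 m ρ M) (hd : dist x z = ρ) : z ∈ bdry1 m ρ M := by
  refine ⟨hz, le_antisymm ?_ ?_⟩
  · calc Metric.infDist z (bdry0 m ρ M) ≤ dist z x := infDist_le_dist_of_mem hx
    _ = ρ := by rw [dist_comm]; exact hd
  · refine le_infDist' ⟨x, hx⟩ fun y hy => ?_
    exact grid_dist_ge hm hρ hz.2 (hM hy.1) (fun h => hz.1 (h ▸ hy.1))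

/-- First-exit lemma: along a grid path from inside `M` to outside `M`, there is a step
crossing the boundary. -/
lemma exit (hm : 1 ≤ m) (hρ : 0 < ρ) {M : Set (Fin m → ℝ)} (hM : M ⊆ grid m ρ)
    {p : ℕ → Fin m → ℝ} {k : ℕ} (hg : ∀ ℓ ≤ k, p ℓ ∈ grid m ρ)
    (hstep : ∀ ℓ, 1 ≤ ℓ → ℓ ≤ k → dist (p ℓ) (p (ℓ - 1)) ≤ ρ)
    (h0 : p 0 ∈ M) (hk : p k ∉ M) :
    ∃ ℓ, 1 ≤ ℓ ∧ ℓ ≤ k ∧ p (ℓ - 1) ∈ bdry0 m ρ M ∧ p ℓ ∈ Mᶜ ∩ grid m ρ ∧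
      dist (p (ℓ - 1)) (p ℓ) = ρ := by
  classical
  have hex : ∃ ℓ, p ℓ ∉ M := ⟨k, hk⟩
  set ℓ := Nat.find hex with hℓdef
  have hℓP : p ℓ ∉ M := Nat.find_spec hex
  have hℓk : ℓ ≤ k := Nat.find_min' hex hk
  have hℓ1 : 1 ≤ ℓ := by
    rcases Nat.eq_zero_or_pos ℓ with h | h
    · exact absurd (h ▸ hℓP) (not_not_intro h0)
    · exact h
  have hprev : p (ℓ - 1) ∈ M := by
    by_contra h
    exact Nat.find_min hex (by omega) h
  have hzg : p ℓ ∈ grid m ρ := hg ℓ hℓk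
  have hne : p (ℓ - 1) ≠ p ℓ := fun h => hℓP (h ▸ hprev)
  have hdist : dist (p (ℓ - 1)) (p ℓ) = ρ := by
    refine le_antisymm ?_ (grid_dist_ge hm hρ (hg (ℓ - 1) (by omega)) hzg hne)
    rw [dist_comm]
    exact hstep ℓ hℓ1 hℓk
  exact ⟨ℓ, hℓ1, hℓk, ⟨hprev, p ℓ, ⟨hℓP, hzg⟩, hdist⟩, ⟨hℓP, hzg⟩, hdist⟩

/-- If `∂⁰M = ∅` for a nonempty `M ⊆ grid`, then `M` is the whole grid. -/
lemma eq_grid_of_bdry0_empty (hm : 1 ≤ m) (hρ : 0 < ρ) {M : Set (Fin m → ℝ)}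
    (hM : M ⊆ grid m ρ) (hne : M.Nonempty) (h0 : bdry0 m ρ M = ∅) : M = grid m ρ := by
  refine Set.Subset.antisymm hM fun z hz => ?_
  by_contra hzM
  obtain ⟨x, hx⟩ := hne
  obtain ⟨n, p, -, hp0, hpn, hpg, hstep, -, -⟩ := connect hm hρ (hM hx) hz
  obtain ⟨ℓ, -, -, hb, -, -⟩ := exit hm hρ hM (fun ℓ _ => hpg ℓ)
    (fun ℓ h1 _ => hstep ℓ h1) (hp0 ▸ hx) (hpn ▸ hzM)
  rw [h0] at hb
  exact hb

lemma bdry1_nonempty (hm : 1 ≤ m) (hρ : 0 < ρ) {M : Set (Fin m → ℝ)}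
    (hM : M ⊆ grid m ρ) (h0 : (bdry0 m ρ M).Nonempty) : (bdry1 m ρ M).Nonempty := by
  obtain ⟨x, hx⟩ := h0
  obtain ⟨-, z, hz, hd⟩ := id hx
  exact ⟨z, mem_bdry1_of_nbr hm hρ hM hz hx hd⟩



/-- Points of `M` are strictly closer to `∂⁰M` than to `∂¹M`. -/
lemma infDist_lt_of_mem (hm : 1 ≤ m) (hρ : 0 < ρ) {M : Set (Fin m → ℝ)}
    (hM : M ⊆ grid m ρ) (h0 : (bdry0 m ρ M).Nonempty) {x : Fin m → ℝ} (hx : x ∈ M) :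
    Metric.infDist x (bdry0 m ρ M) < Metric.infDist x (bdry1 m ρ M) := by
  have h1 : (bdry1 m ρ M).Nonempty := bdry1_nonempty hm hρ hM h0
  obtain ⟨z, n₀, hzmem, hdz, hinf⟩ :=
    infDist_attained hm hρ (bdry1_subset_grid M) h1 (hM hx)
  have hzM : z ∉ M := hzmem.1.1
  obtain ⟨n, p, hdist', hp0, hpn, hpg, hstep, hds, -⟩ := connect hm hρ (hM hx) hzmem.1.2
  have hinf' : Metric.infDist x (bdry1 m ρ M) = ρ * n := by rw [hinf, ← hdz, hdist']
  have hn1 : 1 ≤ n := by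
    rcases Nat.eq_zero_or_pos n with h | h
    · exfalso
      apply hzM
      have : dist x z = 0 := by rw [hdist', h]; simp
      rwa [← eq_of_dist_eq_zero this]
    · exact h
  obtain ⟨ℓ, hℓ1, hℓk, hb, -, -⟩ := exit hm hρ hM (fun ℓ _ => hpg ℓ)
    (fun ℓ h1 _ => hstep ℓ h1) (hp0 ▸ hx) (hpn ▸ hzM)
  have hle : Metric.infDist x (bdry0 m ρ M) ≤ ρ * ((ℓ : ℝ) - 1) := by
    calc Metric.infDist x (bdry0 m ρ M) ≤ dist x (p (ℓ - 1)) := infDist_le_dist_of_mem hb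
    _ ≤ ρ * ((ℓ - 1 : ℕ) : ℝ) := hds (ℓ - 1)
    _ = ρ * ((ℓ : ℝ) - 1) := by
        congr 1
        push_cast [Nat.cast_sub hℓ1]
        ring
  rw [hinf']
  have hℓn : (ℓ : ℝ) ≤ n := by exact_mod_cast hℓk
  have h1ℓ : (1:ℝ) ≤ ℓ := by exact_mod_cast hℓ1
  calc Metric.infDist x (bdry0 m ρ M) ≤ ρ * ((ℓ : ℝ) - 1) := hle
  _ < ρ * n := by nlinarith

/-- Grid points outside `M` are strictly closer to `∂¹M` than to `∂⁰M`. -/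
lemma infDist_lt_of_notMem (hm : 1 ≤ m) (hρ : 0 < ρ) {M : Set (Fin m → ℝ)}
    (hM : M ⊆ grid m ρ) (h0 : (bdry0 m ρ M).Nonempty) {x : Fin m → ℝ}
    (hxg : x ∈ grid m ρ) (hx : x ∉ M) :
    Metric.infDist x (bdry1 m ρ M) < Metric.infDist x (bdry0 m ρ M) := by
  obtain ⟨y, n₀, hymem, hdy, hinf⟩ :=
    infDist_attained hm hρ (bdry0_subset_grid hM) h0 hxg
  have hyM : y ∈ M := hymem.1
  -- walk from y (inside) to x (outside)
  obtain ⟨n, p, hdist', hp0, hpn, hpg, hstep, -, hde⟩ := connect hm hρ (hM hyM) hxg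
  have hinf' : Metric.infDist x (bdry0 m ρ M) = ρ * n := by
    rw [hinf, ← hdy, dist_comm x y, hdist']
  have hn1 : 1 ≤ n := by
    rcases Nat.eq_zero_or_pos n with h | h
    · exfalso
      apply hx
      have : dist y x = 0 := by rw [hdist', h]; simp
      rwa [← eq_of_dist_eq_zero this]
    · exact h
  obtain ⟨ℓ, hℓ1, hℓk, hb, hz, hd⟩ := exit hm hρ hM (fun ℓ _ => hpg ℓ)
    (fun ℓ h1 _ => hstep ℓ h1) (hp0 ▸ hyM) (hpn ▸ hx)
  have hz1 : p ℓ ∈ bdry1 m ρ M := mem_bdry1_of_nbr hm hρ hM hz hb hd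
  have hle : Metric.infDist x (bdry1 m ρ M) ≤ ρ * ((n : ℝ) - ℓ) := by
    calc Metric.infDist x (bdry1 m ρ M) ≤ dist x (p ℓ) := infDist_le_dist_of_mem hz1
    _ = dist (p ℓ) x := dist_comm _ _
    _ ≤ ρ * ((n : ℝ) - ℓ) := hde ℓ hℓk
  rw [hinf']
  have hℓ1' : (1:ℝ) ≤ ℓ := by exact_mod_cast hℓ1
  calc Metric.infDist x (bdry1 m ρ M) ≤ ρ * ((n : ℝ) - ℓ) := hle
  _ < ρ * n := by nlinarith

lemma M_eq (hm : 1 ≤ m) (hρ : 0 < ρ) {M : Set (Fin m → ℝ)} (hM : M ⊆ grid m ρ)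
    (h0 : (bdry0 m ρ M).Nonempty) : M = Mset m ρ (bdry0 m ρ M) (bdry1 m ρ M) := by
  ext x
  constructor
  · intro hx
    exact ⟨hM hx, infDist_lt_of_mem hm hρ hM h0 hx⟩
  · rintro ⟨hxg, hlt⟩
    by_contra hxM
    exact absurd hlt (not_lt.2 (infDist_lt_of_notMem hm hρ hM h0 hxg hxM).le)

lemma part1 (hm : 1 ≤ m) (hρ : 0 < ρ) {M : Set (Fin m → ℝ)}
    (hM : M ⊆ grid m ρ) (hMne : M.Nonempty) :
    BoundaryPair m ρ (bdry0 m ρ M) (bdry1 m ρ M) ∨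
      (bdry0 m ρ M = ∅ ∧ bdry1 m ρ M = ∅) := by
  rcases Set.eq_empty_or_nonempty (bdry0 m ρ M) with h0 | h0
  · right
    refine ⟨h0, Set.eq_empty_iff_forall_notMem.2 fun z hz => ?_⟩
    have := hz.2
    rw [h0, Metric.infDist_empty] at this
    exact absurd this.symm hρ.ne'
  · left
    have h1 := bdry1_nonempty hm hρ hM h0
    refine ⟨bdry0_subset_grid hM, bdry1_subset_grid M,
      Set.nonempty_iff_ne_empty.1 h0, Set.nonempty_iff_ne_empty.1 h1, ?_, ?_, ?_, ?_⟩
    · refine Set.eq_empty_iff_forall_notMem.2 fun w hw => ?_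
      exact hw.2.1.1 hw.1.1
    · intro x hx
      obtain ⟨-, z, hz, hd⟩ := id hx
      exact ⟨z, mem_bdry1_of_nbr hm hρ hM hz hx hd, hd⟩
    · intro z hz
      obtain ⟨y, n, hy, hdzy, hinfz⟩ :=
        infDist_attained hm hρ (bdry0_subset_grid hM) h0 hz.1.2
      refine ⟨y, hy, ?_⟩
      rw [dist_comm, hdzy, ← hinfz, hz.2]
    · intro x hx z hz k p hp hk
      obtain ⟨hp0, hpk, hpg, hstep⟩ := hp
      obtain ⟨ℓ, hℓ1, hℓk, hb, hzc, hd⟩ := exit hm hρ hM hpg hstep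
        (hp0 ▸ hx.1) (hpk ▸ hz.1.1)
      by_cases hc : ℓ < k
      · exact ⟨ℓ, by omega, hc, Or.inr (mem_bdry1_of_nbr hm hρ hM hzc hb hd)⟩
      · exact ⟨ℓ - 1, by omega, by omega, Or.inl hb⟩

lemma part2 (hm : 1 ≤ m) (hρ : 0 < ρ) {M M' : Set (Fin m → ℝ)}
    (hM : M ⊆ grid m ρ) (hMne : M.Nonempty) (hM' : M' ⊆ grid m ρ) (hM'ne : M'.Nonempty)
    (hb0 : bdry0 m ρ M = bdry0 m ρ M') (hb1 : bdry1 m ρ M = bdry1 m ρ M') : M = M' := by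
  rcases Set.eq_empty_or_nonempty (bdry0 m ρ M) with h0 | h0
  · have h0' : bdry0 m ρ M' = ∅ := hb0 ▸ h0
    rw [eq_grid_of_bdry0_empty hm hρ hM hMne h0,
      eq_grid_of_bdry0_empty hm hρ hM' hM'ne h0']
  · have h0' : (bdry0 m ρ M').Nonempty := hb0 ▸ h0
    rw [M_eq hm hρ hM h0, M_eq hm hρ hM' h0', hb0, hb1]

lemma part4 (hρ : 0 < ρ) :
    bdry0 m ρ (grid m ρ) = ∅ ∧ bdry1 m ρ (grid m ρ) = ∅ := by
  have h0 : bdry0 m ρ (grid m ρ) = ∅ := by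
    refine Set.eq_empty_iff_forall_notMem.2 fun x hx => ?_
    obtain ⟨-, z, hz, -⟩ := id hx
    exact hz.1 hz.2
  refine ⟨h0, Set.eq_empty_iff_forall_notMem.2 fun z hz => ?_⟩
  exact hz.1.1 hz.1.2

lemma part3 (hm : 1 ≤ m) (hρ : 0 < ρ) (D0 D1 : Set (Fin m → ℝ))
    (hbp : BoundaryPair m ρ D0 D1) :
    Mset m ρ D0 D1 ⊆ grid m ρ ∧ (Mset m ρ D0 D1).Nonempty ∧
      bdry0 m ρ (Mset m ρ D0 D1) = D0 ∧ bdry1 m ρ (Mset m ρ D0 D1) = D1 := by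
  obtain ⟨hg0, hg1, hne0, hne1, hdisj, hax3, hax4, hax5⟩ := hbp
  have hne0' : D0.Nonempty := Set.nonempty_iff_ne_empty.2 hne0
  have hne1' : D1.Nonempty := Set.nonempty_iff_ne_empty.2 hne1
  have hdisj' : ∀ x, x ∈ D0 → x ∉ D1 := fun x h0 h1 => by
    have hx : x ∈ D0 ∩ D1 := ⟨h0, h1⟩
    rw [hdisj] at hx
    exact hx
  have hg_mem0 : ∀ x ∈ D0, infDist x D1 = ρ := by
    intro x hx
    refine le_antisymm ?_ (infDist_ge_of_notMem hm hρ hg1 hne1' (hg0 hx) (hdisj' x hx))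
    obtain ⟨z, hz, hd⟩ := hax3 x hx
    exact hd ▸ infDist_le_dist_of_mem hz
  have hf_mem1 : ∀ z ∈ D1, infDist z D0 = ρ := by
    intro z hz
    refine le_antisymm ?_ (infDist_ge_of_notMem hm hρ hg0 hne0' (hg1 hz)
      (fun h => hdisj' z h hz))
    obtain ⟨x, hx, hd⟩ := hax4 z hz
    calc infDist z D0 ≤ dist z x := infDist_le_dist_of_mem hx
    _ = ρ := by rw [dist_comm]; exact hd
  have hD0M : D0 ⊆ Mset m ρ D0 D1 := fun x hx =>
    ⟨hg0 hx, by rw [infDist_zero_of_mem hx, hg_mem0 x hx]; exact hρ⟩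
  have hD1M : ∀ z ∈ D1, z ∉ Mset m ρ D0 D1 := by
    intro z hz hzM
    have h2 := hzM.2
    rw [infDist_zero_of_mem hz, hf_mem1 z hz] at h2
    exact absurd h2 (not_lt.2 hρ.le)
  have hMg : Mset m ρ D0 D1 ⊆ grid m ρ := fun x hx => hx.1
  have hb0 : bdry0 m ρ (Mset m ρ D0 D1) = D0 := by
    apply Set.Subset.antisymm
    · rintro x ⟨hxM, z, hzc, hdxz⟩
      by_contra hxD0
      by_cases hzD1 : z ∈ D1
      · have hgx : infDist x D1 ≤ ρ := hdxz ▸ infDist_le_dist_of_mem hzD1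
        have hfx : infDist x D0 < ρ := lt_of_lt_of_le hxM.2 hgx
        exact absurd hfx (not_lt.2 (infDist_ge_of_notMem hm hρ hg0 hne0' hxM.1 hxD0))
      · have hfx_ge : ρ ≤ infDist x D0 := infDist_ge_of_notMem hm hρ hg0 hne0' hxM.1 hxD0
        have hz_ge : infDist z D1 ≤ infDist z D0 := by
          by_contra hcon
          exact hzc.1 ⟨hzc.2, not_le.1 hcon⟩
        have hgz_ge : ρ ≤ infDist z D1 := infDist_ge_of_notMem hm hρ hg1 hne1' hzc.2 hzD1
        have hzD0 : z ∉ D0 := by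
          intro h
          have h0' := infDist_zero_of_mem (s := D0) h
          rw [h0'] at hz_ge
          linarith
        obtain ⟨y0, n₀, hy0, hdy0, hfx⟩ := infDist_attained hm hρ hg0 hne0' hxM.1
        obtain ⟨z1, s₀, hz1, hdz1, hgz⟩ := infDist_attained hm hρ hg1 hne1' hzc.2
        obtain ⟨n, p1, hd1, hp10, hp1n, hp1g, hp1s, hp1ds, hp1de⟩ :=
          connect hm hρ (hg0 hy0) hxM.1
        obtain ⟨s, p2, hd2, hp20, hp2last, hp2g, hp2st, hp2ds, hp2de⟩ :=
          connect hm hρ hzc.2 (hg1 hz1)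
        have hfx' : infDist x D0 = ρ * n := by
          rw [hfx, ← hdy0, dist_comm]; exact hd1
        have hgz' : infDist z D1 = ρ * s := by
          rw [hgz, ← hdz1]; exact hd2
        have hn1 : 1 ≤ n := by
          by_contra h
          have hn0 : n = 0 := by omega
          rw [hn0] at hfx'; simp at hfx'
          rw [hfx'] at hfx_ge; linarith
        have hs1 : 1 ≤ s := by
          by_contra h
          have hs0 : s = 0 := by omega
          rw [hs0] at hgz'; simp at hgz'
          rw [hgz'] at hgz_ge; linarith
        set k := n + 1 + s with hk
        set P : ℕ → Fin m → ℝ := fun ℓ => if ℓ ≤ n then p1 ℓ else p2 (ℓ - (n+1)) with hP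
        have hPle : ∀ ℓ, ℓ ≤ n → P ℓ = p1 ℓ := fun ℓ h => if_pos h
        have hPgt : ∀ ℓ, n < ℓ → P ℓ = p2 (ℓ - (n+1)) := fun ℓ h => if_neg (by omega)
        have hpath : IsPath m ρ y0 z1 k P := by
          refine ⟨?_, ?_, ?_, ?_⟩
          · rw [hPle 0 (Nat.zero_le n), hp10]
          · rw [hPgt k (by omega)]
            have he : k - (n+1) = s := by omega
            rw [he, hp2last]
          · intro ℓ _
            by_cases h : ℓ ≤ n
            · rw [hPle ℓ h]; exact hp1g ℓ
            · rw [hPgt ℓ (by omega)]; exact hp2g _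
          · intro ℓ hℓ1 hℓk
            by_cases h : ℓ ≤ n
            · rw [hPle ℓ h, hPle (ℓ-1) (by omega)]
              exact hp1s ℓ hℓ1
            · by_cases h2 : ℓ = n + 1
              · rw [hPgt ℓ (by omega), hPle (ℓ-1) (by omega)]
                have e1 : ℓ - (n+1) = 0 := by omega
                have e2 : ℓ - 1 = n := by omega
                rw [e1, e2, hp20, hp1n, dist_comm]
                exact le_of_eq hdxz
              · rw [hPgt ℓ (by omega), hPgt (ℓ-1) (by omega)]
                have e : ℓ - 1 - (n+1) = ℓ - (n+1) - 1 := by omega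
                rw [e]
                exact hp2st (ℓ - (n+1)) (by omega)
        obtain ⟨ℓ, hℓ0, hℓk, hℓmem⟩ := hax5 y0 hy0 z1 hz1 k P hpath (by omega)
        by_cases h : ℓ ≤ n
        · have hdxP : dist x (P ℓ) ≤ ρ * ((n:ℝ) - ℓ) := by
            rw [hPle ℓ h, dist_comm]
            exact hp1de ℓ h
          have hℓ1R : (1:ℝ) ≤ ℓ := by exact_mod_cast hℓ0
          have hbound : ρ * ((n:ℝ) - ℓ) ≤ ρ * ((n:ℝ) - 1) := by nlinarith
          have hlt : ρ * ((n:ℝ) - 1) < ρ * n := by nlinarith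
          rcases hℓmem with hmem | hmem
          · have h1 := infDist_le_dist_of_mem (x := x) hmem
            linarith [le_trans h1 hdxP]
          · have h1 := infDist_le_dist_of_mem (x := x) hmem
            linarith [le_trans h1 hdxP, hxM.2]
        · by_cases h2 : ℓ = n + 1
          · have hPz : P ℓ = z := by
              rw [hPgt ℓ (by omega)]
              have e : ℓ - (n+1) = 0 := by omega
              rw [e, hp20]
            rw [hPz] at hℓmem
            rcases hℓmem with hmem | hmem
            · exact hzD0 hmem
            · exact hzD1 hmem
          · have hdzP : dist z (P ℓ) ≤ ρ * ((ℓ - (n+1) : ℕ) : ℝ) := by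
              rw [hPgt ℓ (by omega)]
              exact hp2ds (ℓ - (n+1))
            have hcast : ((ℓ - (n+1) : ℕ) : ℝ) ≤ (s:ℝ) - 1 := by
              have hle : ℓ - (n+1) + 1 ≤ s := by omega
              have hle' := (Nat.cast_le (α := ℝ)).2 hle
              push_cast at hle'
              linarith
            have hb2 : dist z (P ℓ) ≤ ρ * ((s:ℝ) - 1) := le_trans hdzP (by nlinarith)
            have hlt : ρ * ((s:ℝ) - 1) < ρ * s := by nlinarith
            rcases hℓmem with hmem | hmem
            · have h1 := infDist_le_dist_of_mem (x := z) hmem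
              linarith [le_trans h1 hb2, hz_ge]
            · have h1 := infDist_le_dist_of_mem (x := z) hmem
              linarith [le_trans h1 hb2]
    · intro x hx
      obtain ⟨z, hz, hd⟩ := hax3 x hx
      exact ⟨hD0M hx, z, ⟨hD1M z hz, hg1 hz⟩, hd⟩
  refine ⟨hMg, ?_, hb0, ?_⟩
  · obtain ⟨x, hx⟩ := hne0'
    exact ⟨x, hD0M hx⟩
  apply Set.Subset.antisymm
  · rintro z ⟨hzc, hinfz⟩
    rw [hb0] at hinfz
    by_contra hzD1
    have hz_ge : infDist z D1 ≤ infDist z D0 := by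
      by_contra hcon
      exact hzc.1 ⟨hzc.2, not_le.1 hcon⟩
    have hgz_ge : ρ ≤ infDist z D1 := infDist_ge_of_notMem hm hρ hg1 hne1' hzc.2 hzD1
    have hgz : infDist z D1 = ρ := le_antisymm (hinfz ▸ hz_ge) hgz_ge
    obtain ⟨y0, n₀, hy0, hdy0, hfz⟩ := infDist_attained hm hρ hg0 hne0' hzc.2
    have hdzy0 : dist z y0 = ρ := by rw [hdy0, ← hfz, hinfz]
    obtain ⟨z1, s₀, hz1, hdz1, hgz2⟩ := infDist_attained hm hρ hg1 hne1' hzc.2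
    have hdzz1 : dist z z1 = ρ := by rw [hdz1, ← hgz2, hgz]
    set P : ℕ → Fin m → ℝ := fun ℓ => if ℓ = 0 then y0 else if ℓ = 1 then z else z1 with hP
    have hpath : IsPath m ρ y0 z1 2 P := by
      refine ⟨rfl, rfl, ?_, ?_⟩
      · intro ℓ hℓ
        interval_cases ℓ
        · exact hg0 hy0
        · exact hzc.2
        · exact hg1 hz1
      · intro ℓ hℓ1 hℓ2
        interval_cases ℓ
        · have e : dist (P 1) (P (1-1)) = dist z y0 := rfl
          rw [e, hdzy0]
        · have e : dist (P 2) (P (2-1)) = dist z1 z := rfl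
          rw [e, dist_comm, hdzz1]
    obtain ⟨ℓ, hℓ0, hℓ2, hmem⟩ := hax5 y0 hy0 z1 hz1 2 P hpath (by omega)
    have hℓ1 : ℓ = 1 := by omega
    rw [hℓ1] at hmem
    have hPz : P 1 = z := rfl
    rw [hPz] at hmem
    rcases hmem with hmem | hmem
    · have h0' := infDist_zero_of_mem hmem
      rw [h0'] at hinfz
      exact hρ.ne' hinfz.symm
    · exact hzD1 hmem
  · intro z hz
    exact ⟨⟨hD1M z hz, hg1 hz⟩, by rw [hb0]; exact hf_mem1 z hz⟩

end Helpers

theorem stmt11 (m : ℕ) (hm : 1 ≤ m) (ρ : ℝ) (hρ : 0 < ρ) :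
    -- `tr_ρ` maps `S_ρ` into `bd_ρ`
    (∀ M : Set (Fin m → ℝ), M ⊆ grid m ρ → M.Nonempty →
      (BoundaryPair m ρ (bdry0 m ρ M) (bdry1 m ρ M) ∨
        (bdry0 m ρ M = ∅ ∧ bdry1 m ρ M = ∅))) ∧
    -- `tr_ρ` is injective on `S_ρ`
    (∀ M M' : Set (Fin m → ℝ), M ⊆ grid m ρ → M.Nonempty → M' ⊆ grid m ρ → M'.Nonempty →
      bdry0 m ρ M = bdry0 m ρ M' → bdry1 m ρ M = bdry1 m ρ M' → M = M') ∧
    -- `tr_ρ` is surjective onto `bd_ρ`, with inverse `M(D0, D1)` on `bd_ρ⁻` ...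
    (∀ D0 D1 : Set (Fin m → ℝ), BoundaryPair m ρ D0 D1 →
      Mset m ρ D0 D1 ⊆ grid m ρ ∧ (Mset m ρ D0 D1).Nonempty ∧
      bdry0 m ρ (Mset m ρ D0 D1) = D0 ∧ bdry1 m ρ (Mset m ρ D0 D1) = D1) ∧
    -- ... and inverse `Δ_ρ` at `(∅, ∅)`
    (bdry0 m ρ (grid m ρ) = ∅ ∧ bdry1 m ρ (grid m ρ) = ∅) := by
  exact ⟨fun M hM hMne => part1 hm hρ hM hMne,
    fun M M' hM hMne hM' hM'ne hb0 hb1 => part2 hm hρ hM hMne hM' hM'ne hb0 hb1,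
    fun D0 D1 hbp => part3 hm hρ D0 D1 hbp,
    part4 hρ⟩

end
end
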